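/- arXiv:2408.02488 — 5 statements merged into one kernel-verified Lean document; each statement's English description precedes it below -/
import Mathlib

section
/- Let A and B be n×n real symmetric matrices with the same characteristic polynomial, common distinct eigenvalues λ₁,…,λ_m, and spectral projections E₁,…,E_m and F₁,…,F_m respectively (so A = Σᵢ λᵢEᵢ and B = Σᵢ λᵢFᵢ). Let b, c ∈ ℝⁿ. Suppose that (1) the bordered matrices [[A, b],[bᵀ, 0]] and [[B, c],[cᵀ, 0]] have the same characteristic polynomial, (2) the bordered matrices [[A, e],[eᵀ, 0]] and [[B, e],[eᵀ, 0]] have the same characteristic polynomial, and (3) the doubly bordered matrices [[A, b, e],[bᵀ, 0, 1],[eᵀ, 1, 0]] and [[B, c, e],[cᵀ, 0, 1],[eᵀ, 1, 0]] have the same characteristic polynomial. Then for every i ∈ {1,…,m}: bᵀEᵢb = cᵀFᵢc, eᵀEᵢe = eᵀFᵢe, and bᵀEᵢe = cᵀFᵢe. -/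
open Matrix

noncomputable section

/-- The bordered matrix `[[A, b], [bᵀ, 0]]`. -/
def border {V : Type} [Fintype V] [DecidableEq V] (A : Matrix V V ℝ) (b : V → ℝ) :
    Matrix (V ⊕ Unit) (V ⊕ Unit) ℝ :=
  Matrix.fromBlocks A (Matrix.of fun i _ => b i) (Matrix.of fun _ j => b j) 0

/-- `E 1, …, E m` are the spectral projections of the real symmetric matrix `A` associated
with its distinct eigenvalues `lam 1, …, lam m`: they are symmetric idempotents, mutually
orthogonal, summing to the identity, with `A = ∑ i, lam i • E i`, the `lam i` pairwise
distinct and each `E i` nonzero (so each `lam i` really is an eigenvalue). -/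
structure SpectralDecomp {n m : ℕ} (A : Matrix (Fin n) (Fin n) ℝ) (lam : Fin m → ℝ)
    (E : Fin m → Matrix (Fin n) (Fin n) ℝ) : Prop where
  symm : ∀ i, (E i).IsSymm
  idem : ∀ i, E i * E i = E i
  mul_eq_zero : ∀ i j, i ≠ j → E i * E j = 0
  sum_eq_one : ∑ i, E i = 1
  eq_sum : A = ∑ i, lam i • E i
  injective : Function.Injective lam
  ne_zero : ∀ i, E i ≠ 0

/-!
Off the spectrum, the Schur complement gives
`charpoly (border A b) x = charpoly A x * (x - bᵀ (x - A)⁻¹ b)`, and the resolvent is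
`(x - A)⁻¹ = ∑ᵢ (x - λᵢ)⁻¹ Eᵢ`. So equal bordered characteristic polynomials give equal rational
functions `∑ᵢ bᵀEᵢb / (x - λᵢ)`, and since the poles `λᵢ` are distinct their residues `bᵀEᵢb`
agree. For the doubly bordered matrices the Schur complement is `2 × 2`, symmetric because the
`Eᵢ` are, with determinant
`(x - ∑ bᵀEᵢb/(x - λᵢ)) (x - ∑ eᵀEᵢe/(x - λᵢ)) - (1 + ∑ bᵀEᵢe/(x - λᵢ))²`. Once the diagonal
terms are known to agree, the squares agree; both bases tend to `1` at infinity, so the bases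
agree for large `x`, and comparing residues again gives `bᵀEᵢe = cᵀFᵢe`.
-/

open Polynomial Finset Filter Topology

section Schur

variable {K V ι : Type*} [Field K] [Fintype V] [DecidableEq V] [Fintype ι] [DecidableEq ι]

theorem scalar_sub_fromBlocks (M : Matrix V V K) (B : Matrix V ι K) (C : Matrix ι V K)
    (D : Matrix ι ι K) (x : K) :
    scalar (V ⊕ ι) x - fromBlocks M B C D
      = fromBlocks (scalar V x - M) (-B) (-C) (scalar ι x - D) := by
  ext (i | i) (j | j) <;> simp [diagonal_apply]

theorem det_scalar_sub_fromBlocks (M : Matrix V V K) (B : Matrix V ι K) (C : Matrix ι V K)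
    (D : Matrix ι ι K) {x : K} (hx : (scalar V x - M).det ≠ 0) :
    (scalar (V ⊕ ι) x - fromBlocks M B C D).det
      = (scalar V x - M).det * (scalar ι x - D - C * (scalar V x - M)⁻¹ * B).det := by
  have := invertibleOfIsUnitDet _ (isUnit_iff_ne_zero.2 hx)
  rw [scalar_sub_fromBlocks, det_fromBlocks₁₁, invOf_eq_nonsing_inv]
  simp only [Matrix.neg_mul, Matrix.mul_neg, neg_neg]

omit [DecidableEq V] [Fintype ι] [DecidableEq ι] in
theorem mul_mul_transpose_apply (C : Matrix ι V K) (N : Matrix V V K) (j k : ι) :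
    (C * N * Cᵀ) j k = C j ⬝ᵥ N *ᵥ C k := by
  simp only [mul_apply, dotProduct, mulVec, transpose_apply, Finset.sum_mul, Finset.mul_sum,
    mul_assoc]
  exact Finset.sum_comm

end Schur

section Border

variable {V : Type} [Fintype V] [DecidableEq V]

theorem border_eq_fromBlocks (M : Matrix V V ℝ) (b : V → ℝ) :
    border M b = fromBlocks M (replicateRow Unit b)ᵀ (replicateRow Unit b) 0 :=
  rfl

theorem eval_charpoly_border (M : Matrix V V ℝ) (b : V → ℝ) {x : ℝ}
    (hx : M.charpoly.eval x ≠ 0) :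
    (border M b).charpoly.eval x = M.charpoly.eval x * (x - b ⬝ᵥ (scalar V x - M)⁻¹ *ᵥ b) := by
  rw [eval_charpoly] at hx
  rw [eval_charpoly, eval_charpoly, border_eq_fromBlocks, det_scalar_sub_fromBlocks _ _ _ _ hx,
    det_unique (n := Unit), Matrix.sub_apply, mul_mul_transpose_apply]
  congr 1
  simp only [scalar_apply, diagonal_apply_eq, sub_zero]
  rfl

def borderBorderEquiv : V ⊕ Fin 2 ≃ (V ⊕ Unit) ⊕ Unit :=
  (Equiv.sumCongr (Equiv.refl V)
    (finSumFinEquiv.symm.trans (Equiv.sumCongr finOneEquiv finOneEquiv))).trans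
    (Equiv.sumAssoc V Unit Unit).symm

theorem border_border_eq_reindex (M : Matrix V V ℝ) (b e : V → ℝ) (t : ℝ) :
    border (border M b) (Sum.elim e fun _ => t)
      = reindex borderBorderEquiv borderBorderEquiv
          (fromBlocks M (of ![b, e])ᵀ (of ![b, e]) !![0, t; t, 0]) := by
  ext ((i | _) | _) ((j | _) | _) <;> rfl

theorem eval_charpoly_border_border (M : Matrix V V ℝ) (b e : V → ℝ) (t : ℝ) {x : ℝ}
    (hx : M.charpoly.eval x ≠ 0) :
    (border (border M b) (Sum.elim e fun _ => t)).charpoly.eval x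
      = M.charpoly.eval x *
          ((x - b ⬝ᵥ (scalar V x - M)⁻¹ *ᵥ b) * (x - e ⬝ᵥ (scalar V x - M)⁻¹ *ᵥ e)
            - (t + b ⬝ᵥ (scalar V x - M)⁻¹ *ᵥ e) * (t + e ⬝ᵥ (scalar V x - M)⁻¹ *ᵥ b)) := by
  rw [eval_charpoly] at hx
  rw [border_border_eq_reindex, charpoly_reindex, eval_charpoly, eval_charpoly,
    det_scalar_sub_fromBlocks _ _ _ _ hx, det_fin_two]
  have hrows : ∀ i, of ![b, e] i = ![b, e] i := fun _ => rfl
  congr 1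
  simp only [Matrix.sub_apply, mul_mul_transpose_apply, hrows, scalar_apply, diagonal_apply_eq, diagonal_apply_ne _ zero_ne_one,
    diagonal_apply_ne _ one_ne_zero, of_apply, cons_val_zero, cons_val_one, cons_val_fin_one]
  ring

end Border

section SimplePoles

variable {K ι : Type*} [Field K] [Fintype ι]

def simplePoleSum (lam c : ι → K) (x : K) : K :=
  ∑ i, c i / (x - lam i)

section Numerator

variable [DecidableEq ι]

/-- Clearing the denominators of `simplePoleSum lam c` by `∏ i, (X - lam i)`. -/
def simplePoleNumerator (lam c : ι → K) : K[X] :=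
  ∑ i, C (c i) * Lagrange.nodal (univ.erase i) lam

theorem eval_simplePoleNumerator (lam c : ι → K) {x : K} (hx : ∀ i, x ≠ lam i) :
    (simplePoleNumerator lam c).eval x
      = (Lagrange.nodal univ lam).eval x * simplePoleSum lam c x := by
  rw [simplePoleNumerator, simplePoleSum, eval_finsetSum, Finset.mul_sum]
  refine Finset.sum_congr rfl fun i _ => ?_
  rw [Lagrange.nodal_eq_mul_nodal_erase (mem_univ i), eval_mul, eval_mul, eval_C, eval_sub, eval_X,
    eval_C]
  field_simp [sub_ne_zero.2 (hx i)]

theorem eval_simplePoleNumerator_node (lam c : ι → K) (i : ι) :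
    (simplePoleNumerator lam c).eval (lam i)
      = c i * (Lagrange.nodal (univ.erase i) lam).eval (lam i) := by
  rw [simplePoleNumerator, eval_finsetSum, Finset.sum_eq_single i]
  · rw [eval_mul, eval_C]
  · intro j _ hji
    rw [eval_mul, Lagrange.eval_nodal_at_node (mem_erase.2 ⟨hji.symm, mem_univ i⟩), mul_zero]
  · simp

end Numerator

theorem eq_of_infinite_setOf_simplePoleSum_eq {lam c d : ι → K} (hlam : Function.Injective lam)
    (h : {x | simplePoleSum lam c x = simplePoleSum lam d x}.Infinite) : c = d := by
  classical
  have hnum : simplePoleNumerator lam c = simplePoleNumerator lam d := by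
    refine eq_of_infinite_eval_eq _ _ ((h.sdiff (Set.finite_range lam)).mono ?_)
    rintro x ⟨hx, hx_range⟩
    have hx_node : ∀ i, x ≠ lam i := fun i hxi => hx_range ⟨i, hxi.symm⟩
    simp only [Set.mem_ofPred_eq] at hx ⊢
    rw [eval_simplePoleNumerator _ _ hx_node, eval_simplePoleNumerator _ _ hx_node, hx]
  funext i
  have hi := congrArg (eval (lam i)) hnum
  rw [eval_simplePoleNumerator_node, eval_simplePoleNumerator_node] at hi
  exact mul_right_cancel₀
    (Lagrange.eval_nodal_not_at_node fun j hj => hlam.ne (mem_erase.1 hj).1.symm) hi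

end SimplePoles

theorem eq_of_eventually_simplePoleSum_eq {ι : Type*} [Fintype ι] {lam c d : ι → ℝ}
    (hlam : Function.Injective lam)
    (h : ∀ᶠ x in atTop, simplePoleSum lam c x = simplePoleSum lam d x) : c = d :=
  eq_of_infinite_setOf_simplePoleSum_eq hlam <|
    frequently_cofinite_iff_infinite.1 (h.frequently.filter_mono atTop_le_cofinite)

theorem tendsto_simplePoleSum_atTop {ι : Type*} [Fintype ι] (lam c : ι → ℝ) :
    Tendsto (simplePoleSum lam c) atTop (𝓝 0) := by
  have hden : ∀ i, Tendsto (fun x => x - lam i) atTop atTop := fun i => by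
    simpa only [sub_eq_add_neg, id] using tendsto_atTop_add_const_right atTop (-lam i) tendsto_id
  unfold simplePoleSum
  simpa only [sum_const_zero] using
    tendsto_finsetSum univ fun i _ => tendsto_const_nhds.div_atTop (hden i)

theorem eventually_atTop_forall_ne {ι : Type*} [Finite ι] (lam : ι → ℝ) :
    ∀ᶠ x in atTop, ∀ i, x ≠ lam i :=
  eventually_all.2 fun i => eventually_ne_atTop (lam i)

def spectralWeights {ι V R : Type*} [Fintype V] [NonUnitalNonAssocSemiring R]
    (E : ι → Matrix V V R) (u v : V → R) : ι → R :=
  fun i => u ⬝ᵥ E i *ᵥ v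

namespace SpectralDecomp

variable {n m : ℕ} {A B : Matrix (Fin n) (Fin n) ℝ} {lam : Fin m → ℝ}
  {E F : Fin m → Matrix (Fin n) (Fin n) ℝ}

theorem sum_smul_mul_sum_smul (hE : SpectralDecomp A lam E) (a c : Fin m → ℝ) :
    (∑ i, a i • E i) * ∑ i, c i • E i = ∑ i, (a i * c i) • E i := by
  simp only [Finset.sum_mul, Finset.mul_sum, smul_mul_smul_comm]
  refine Finset.sum_congr rfl fun i _ => ?_
  rw [Finset.sum_eq_single i (fun j _ hji => by rw [hE.mul_eq_zero j i hji, smul_zero])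
    (by simp), hE.idem]

theorem scalar_sub_eq_sum (hE : SpectralDecomp A lam E) (x : ℝ) :
    scalar (Fin n) x - A = ∑ i, (x - lam i) • E i := by
  simp only [sub_smul, Finset.sum_sub_distrib, ← Finset.smul_sum, hE.sum_eq_one, ← hE.eq_sum,
    scalar_apply, smul_one_eq_diagonal]

theorem scalar_sub_mul_sum_inv_smul (hE : SpectralDecomp A lam E) {x : ℝ}
    (hx : ∀ i, x ≠ lam i) :
    (scalar (Fin n) x - A) * ∑ i, (x - lam i)⁻¹ • E i = 1 := by
  rw [hE.scalar_sub_eq_sum, hE.sum_smul_mul_sum_smul]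
  simp only [mul_inv_cancel₀ (sub_ne_zero.2 (hx _)), one_smul, hE.sum_eq_one]

theorem eval_charpoly_ne_zero (hE : SpectralDecomp A lam E) {x : ℝ} (hx : ∀ i, x ≠ lam i) :
    A.charpoly.eval x ≠ 0 := by
  rw [eval_charpoly]
  exact det_ne_zero_of_right_inverse (hE.scalar_sub_mul_sum_inv_smul hx)

theorem dotProduct_inv_scalar_sub_mulVec (hE : SpectralDecomp A lam E) {x : ℝ}
    (hx : ∀ i, x ≠ lam i) (u v : Fin n → ℝ) :
    u ⬝ᵥ (scalar (Fin n) x - A)⁻¹ *ᵥ v = simplePoleSum lam (spectralWeights E u v) x := by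
  simp only [inv_eq_right_inv (hE.scalar_sub_mul_sum_inv_smul hx), sum_mulVec, dotProduct_sum,
    smul_mulVec, dotProduct_smul, simplePoleSum, spectralWeights, smul_eq_mul, div_eq_inv_mul]

theorem spectralWeights_comm (hE : SpectralDecomp A lam E) (u v : Fin n → ℝ) :
    spectralWeights E u v = spectralWeights E v u := by
  funext i
  rw [spectralWeights, spectralWeights, dotProduct_mulVec, ← mulVec_transpose, (hE.symm i).eq,
    dotProduct_comm]

theorem eval_charpoly_border (hE : SpectralDecomp A lam E) (b : Fin n → ℝ) {x : ℝ}
    (hx : ∀ i, x ≠ lam i) :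
    (border A b).charpoly.eval x
      = A.charpoly.eval x * (x - simplePoleSum lam (spectralWeights E b b) x) := by
  rw [_root_.eval_charpoly_border A b (hE.eval_charpoly_ne_zero hx),
    hE.dotProduct_inv_scalar_sub_mulVec hx]

theorem eval_charpoly_border_border (hE : SpectralDecomp A lam E) (b e : Fin n → ℝ) (t : ℝ)
    {x : ℝ} (hx : ∀ i, x ≠ lam i) :
    (border (border A b) (Sum.elim e fun _ => t)).charpoly.eval x
      = A.charpoly.eval x * ((x - simplePoleSum lam (spectralWeights E b b) x)
          * (x - simplePoleSum lam (spectralWeights E e e) x)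
          - (t + simplePoleSum lam (spectralWeights E b e) x) ^ 2) := by
  rw [_root_.eval_charpoly_border_border A b e t (hE.eval_charpoly_ne_zero hx)]
  simp only [hE.dotProduct_inv_scalar_sub_mulVec hx, hE.spectralWeights_comm e b, sq]

theorem spectralWeights_eq_of_charpoly_border_eq (hE : SpectralDecomp A lam E)
    (hF : SpectralDecomp B lam F) (hAB : A.charpoly = B.charpoly) {b c : Fin n → ℝ}
    (h : (border A b).charpoly = (border B c).charpoly) :
    spectralWeights E b b = spectralWeights F c c := by
  refine eq_of_eventually_simplePoleSum_eq hE.injective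
    ((eventually_atTop_forall_ne lam).mono fun x hx => ?_)
  have hx' := congrArg (eval x) h
  rw [hE.eval_charpoly_border b hx, hF.eval_charpoly_border c hx, hAB] at hx'
  exact sub_right_injective (mul_left_cancel₀ (hF.eval_charpoly_ne_zero hx) hx')

theorem spectralWeights_eq_of_charpoly_border_border_eq (hE : SpectralDecomp A lam E)
    (hF : SpectralDecomp B lam F) (hAB : A.charpoly = B.charpoly) {b c e f : Fin n → ℝ} {t : ℝ}
    (ht : t ≠ 0) (hbc : spectralWeights E b b = spectralWeights F c c)
    (hef : spectralWeights E e e = spectralWeights F f f)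
    (h : (border (border A b) (Sum.elim e fun _ => t)).charpoly
      = (border (border B c) (Sum.elim f fun _ => t)).charpoly) :
    spectralWeights E b e = spectralWeights F c f := by
  set β := simplePoleSum lam (spectralWeights E b e)
  set γ := simplePoleSum lam (spectralWeights F c f)
  -- `t + β x` and `t + γ x` both tend to `t`, so they cannot be opposite for large `x`.
  have hopp : ∀ᶠ x in atTop, 2 * t + (β x + γ x) ≠ 0 := by
    refine (((tendsto_simplePoleSum_atTop lam _).add (tendsto_simplePoleSum_atTop lam _)).const_add
      (2 * t)).eventually_ne ?_
    simpa using ht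
  refine eq_of_eventually_simplePoleSum_eq hE.injective ?_
  filter_upwards [eventually_atTop_forall_ne lam, hopp] with x hx hx_opp
  have hx' := congrArg (eval x) h
  rw [hE.eval_charpoly_border_border b e t hx, hF.eval_charpoly_border_border c f t hx, hAB, hbc,
    hef] at hx'
  have hsq := sub_right_injective (mul_left_cancel₀ (hF.eval_charpoly_ne_zero hx) hx')
  rcases sq_eq_sq_iff_eq_or_eq_neg.1 hsq with hβγ | hβγ
  · exact add_left_cancel hβγ
  · exact absurd (by linear_combination hβγ) hx_opp

end SpectralDecomp

theorem claim_spectral_inner_products_general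
    {n m : ℕ} (A B : Matrix (Fin n) (Fin n) ℝ) (lam : Fin m → ℝ)
    (E F : Fin m → Matrix (Fin n) (Fin n) ℝ) (b c : Fin n → ℝ)
    (hE : SpectralDecomp A lam E) (hF : SpectralDecomp B lam F)
    (hAB : A.charpoly = B.charpoly)
    (h1 : (border A b).charpoly = (border B c).charpoly)
    (h2 : (border A fun _ => (1 : ℝ)).charpoly = (border B fun _ => (1 : ℝ)).charpoly)
    (h3 : (border (border A b) fun _ => (1 : ℝ)).charpoly
        = (border (border B c) fun _ => (1 : ℝ)).charpoly) :
    ∀ i, b ⬝ᵥ (E i *ᵥ b) = c ⬝ᵥ (F i *ᵥ c)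
      ∧ (fun _ => (1 : ℝ)) ⬝ᵥ (E i *ᵥ fun _ => (1 : ℝ))
          = (fun _ => (1 : ℝ)) ⬝ᵥ (F i *ᵥ fun _ => (1 : ℝ))
      ∧ b ⬝ᵥ (E i *ᵥ fun _ => (1 : ℝ)) = c ⬝ᵥ (F i *ᵥ fun _ => (1 : ℝ)) := by
  have hbc := hE.spectralWeights_eq_of_charpoly_border_eq hF hAB h1
  have hee := hE.spectralWeights_eq_of_charpoly_border_eq hF hAB h2
  have hone : (fun _ : Fin n ⊕ Unit => (1 : ℝ)) = Sum.elim (fun _ => 1) fun _ => 1 :=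
    (Sum.elim_const_const 1).symm
  rw [hone] at h3
  have hbe := hE.spectralWeights_eq_of_charpoly_border_border_eq hF hAB one_ne_zero hbc hee h3
  exact fun i => ⟨congrFun hbc i, congrFun hee i, congrFun hbe i⟩

/-- the Claim in Proposition 5. -/
theorem claim_spectral_inner_products
    {n m : ℕ} (A B : Matrix (Fin n) (Fin n) ℝ) (lam : Fin m → ℝ)
    (E F : Fin m → Matrix (Fin n) (Fin n) ℝ) (b c : Fin n → ℝ)
    (hA : A.IsSymm) (hB : B.IsSymm)
    (hE : SpectralDecomp A lam E) (hF : SpectralDecomp B lam F)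
    (hAB : A.charpoly = B.charpoly)
    (h1 : (border A b).charpoly = (border B c).charpoly)
    (h2 : (border A fun _ => (1 : ℝ)).charpoly = (border B fun _ => (1 : ℝ)).charpoly)
    (h3 : (border (border A b) fun _ => (1 : ℝ)).charpoly
        = (border (border B c) fun _ => (1 : ℝ)).charpoly) :
    ∀ i, b ⬝ᵥ (E i *ᵥ b) = c ⬝ᵥ (F i *ᵥ c)
      ∧ (fun _ => (1 : ℝ)) ⬝ᵥ (E i *ᵥ fun _ => (1 : ℝ))
          = (fun _ => (1 : ℝ)) ⬝ᵥ (F i *ᵥ fun _ => (1 : ℝ))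
      ∧ b ⬝ᵥ (E i *ᵥ fun _ => (1 : ℝ)) = c ⬝ᵥ (F i *ᵥ fun _ => (1 : ℝ)) :=
  claim_spectral_inner_products_general A B lam E F b c hE hF hAB h1 h2 h3
end
end

section
/- Let A be an n×n real symmetric matrix with distinct eigenvalues λ₁,…,λ_m and spectral projections E₁,…,E_m, and let b ∈ ℝⁿ. Then for every real λ that is not an eigenvalue of A, the characteristic polynomial of the doubly bordered (n+2)×(n+2) matrix = [[A, b, e],[bᵀ, 0, 1],[eᵀ, 1, 0]] satisfies det(λI − Â) = det(λI − A) · det of the 2×2 matrix [[λ − Σᵢ bᵀEᵢb/(λ−λᵢ), −(1 + Σᵢ bᵀEᵢe/(λ−λᵢ))], [−(1 + Σᵢ bᵀEᵢe/(λ−λᵢ)), λ − Σᵢ eᵀEᵢe/(λ−λᵢ)]]. -/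
open Matrix

noncomputable section

/-!
With `R = (x • 1 - A)⁻¹`, the Schur complement of the block `x • 1 - A` in `x • 1 - Â` is the
`2 × 2` matrix `[[x, -1], [-1, x]] - [b, e]ᵀ R [b, e]`, so the determinant factors. Since the `Eᵢ`
are complete orthogonal idempotents, `x • 1 - A = ∑ (x - λᵢ) Eᵢ` has inverse `∑ (x - λᵢ)⁻¹ Eᵢ`,
which turns each `uᵀ R v` into `∑ uᵀ Eᵢ v / (x - λᵢ)`.
-/

theorem OrthogonalIdempotents.sum_smul_mul_sum_smul {ι 𝕜 R : Type*} [Fintype ι]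
    [CommSemiring 𝕜] [Semiring R] [Algebra 𝕜 R] {e : ι → R} (he : OrthogonalIdempotents e)
    (c d : ι → 𝕜) :
    (∑ i, c i • e i) * ∑ i, d i • e i = ∑ i, (c i * d i) • e i := by
  classical
  simp only [Finset.sum_mul, Finset.mul_sum, smul_mul_smul_comm, he.mul_eq, smul_ite, smul_zero,
    Finset.sum_ite_eq', Finset.mem_univ, if_true]

theorem CompleteOrthogonalIdempotents.sum_smul_mul_sum_inv_smul {ι 𝕜 R : Type*} [Fintype ι]
    [Field 𝕜] [Semiring R] [Algebra 𝕜 R] {e : ι → R} (he : CompleteOrthogonalIdempotents e)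
    {c : ι → 𝕜} (hc : ∀ i, c i ≠ 0) :
    (∑ i, c i • e i) * ∑ i, (c i)⁻¹ • e i = 1 := by
  simp only [he.toOrthogonalIdempotents.sum_smul_mul_sum_smul, mul_inv_cancel₀ (hc _), one_smul,
    he.complete]

theorem Matrix.IsSymm.dotProduct_mulVec_comm {ι R : Type*} [Fintype ι] [CommSemiring R]
    {M : Matrix ι ι R} (hM : M.IsSymm) (u v : ι → R) : u ⬝ᵥ (M *ᵥ v) = v ⬝ᵥ (M *ᵥ u) := by
  rw [dotProduct_mulVec, ← mulVec_transpose, hM.eq, dotProduct_comm]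

namespace SpectralDecomp

variable {n m : ℕ} {A : Matrix (Fin n) (Fin n) ℝ} {lam : Fin m → ℝ}
  {E : Fin m → Matrix (Fin n) (Fin n) ℝ}

theorem completeOrthogonalIdempotents (hE : SpectralDecomp A lam E) :
    CompleteOrthogonalIdempotents E where
  idem := hE.idem
  ortho _ _ hij := hE.mul_eq_zero _ _ hij
  complete := hE.sum_eq_one

theorem smul_one_sub_eq_sum (hE : SpectralDecomp A lam E) (x : ℝ) :
    x • 1 - A = ∑ i, (x - lam i) • E i := by
  simp only [sub_smul, Finset.sum_sub_distrib, ← Finset.smul_sum, hE.sum_eq_one, ← hE.eq_sum]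

theorem smul_one_sub_mul_sum_inv_smul (hE : SpectralDecomp A lam E) {x : ℝ}
    (hx : ∀ i, x ≠ lam i) : (x • 1 - A) * ∑ i, (x - lam i)⁻¹ • E i = 1 := by
  rw [hE.smul_one_sub_eq_sum]
  exact hE.completeOrthogonalIdempotents.sum_smul_mul_sum_inv_smul fun i => sub_ne_zero.2 (hx i)

theorem dotProduct_inv_smul_one_sub_mulVec (hE : SpectralDecomp A lam E) {x : ℝ}
    (hx : ∀ i, x ≠ lam i) (u v : Fin n → ℝ) :
    u ⬝ᵥ ((x • 1 - A)⁻¹ *ᵥ v) = ∑ i, u ⬝ᵥ (E i *ᵥ v) / (x - lam i) := by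
  simp only [inv_eq_right_inv (hE.smul_one_sub_mul_sum_inv_smul hx), Matrix.sum_mulVec,
    dotProduct_sum, smul_mulVec, dotProduct_smul, smul_eq_mul, div_eq_inv_mul]

end SpectralDecomp

theorem det_smul_one_sub_border_border {V : Type} [Fintype V] [DecidableEq V]
    (A : Matrix V V ℝ) (b : V → ℝ) (c : V ⊕ Unit → ℝ) {x : ℝ} (hx : IsUnit (x • 1 - A).det) :
    (x • 1 - border (border A b) c).det
      = (x • 1 - A).det
        * !![x - b ⬝ᵥ ((x • 1 - A)⁻¹ *ᵥ b),
              -(c (.inr ()) + b ⬝ᵥ ((x • 1 - A)⁻¹ *ᵥ (c ∘ .inl)));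
             -(c (.inr ()) + (c ∘ .inl) ⬝ᵥ ((x • 1 - A)⁻¹ *ᵥ b)),
              x - (c ∘ .inl) ⬝ᵥ ((x • 1 - A)⁻¹ *ᵥ (c ∘ .inl))].det := by
  let W : Matrix (Fin 2) V ℝ := Matrix.of ![b, c ∘ .inl]
  let σ : V ⊕ Fin 2 ≃ (V ⊕ Unit) ⊕ Unit :=
    { toFun := Sum.elim (.inl ∘ .inl) ![.inl (.inr ()), .inr ()]
      invFun := Sum.elim (Sum.elim .inl fun _ => .inr 0) fun _ => .inr 1
      left_inv := by rintro (i | i) <;> [rfl; fin_cases i <;> rfl]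
      right_inv := by rintro ((i | ⟨⟩) | ⟨⟩) <;> rfl }
  have hblocks : (x • 1 - border (border A b) c).submatrix σ σ
      = fromBlocks (x • 1 - A) (-Wᵀ) (-W) !![x, -c (.inr ()); -c (.inr ()), x] := by
    ext (i | i) (j | j) <;> try fin_cases i
    all_goals try fin_cases j
    all_goals simp [σ, W, border, one_apply]
  let := invertibleOfIsUnitDet _ hx
  rw [← det_submatrix_equiv_self σ, hblocks, det_fromBlocks₁₁, invOf_eq_nonsing_inv]
  have hschur : ∀ i j, (W * (x • 1 - A)⁻¹ * Wᵀ) i j = W i ⬝ᵥ ((x • 1 - A)⁻¹ *ᵥ W j) :=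
    fun i j => by rw [dotProduct_mulVec]; rfl
  have hW₀ : W 0 = b := rfl
  have hW₁ : W 1 = c ∘ .inl := rfl
  simp only [Matrix.neg_mul, Matrix.mul_neg, neg_neg]
  congr 2
  ext i j
  simp only [Matrix.sub_apply, hschur]
  fin_cases i <;> fin_cases j <;> simp [hW₀, hW₁] <;> ring

theorem det_double_border_eq_general
    {n m : ℕ} (A : Matrix (Fin n) (Fin n) ℝ) (lam : Fin m → ℝ)
    (E : Fin m → Matrix (Fin n) (Fin n) ℝ) (b : Fin n → ℝ)
    (hE : SpectralDecomp A lam E)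
    (x : ℝ) (hx : ∀ i, x ≠ lam i) :
    (x • (1 : Matrix ((Fin n ⊕ Unit) ⊕ Unit) ((Fin n ⊕ Unit) ⊕ Unit) ℝ)
        - border (border A b) fun _ => (1 : ℝ)).det
      = (x • (1 : Matrix (Fin n) (Fin n) ℝ) - A).det
        * Matrix.det
            !![x - ∑ i, b ⬝ᵥ (E i *ᵥ b) / (x - lam i),
                 -(1 + ∑ i, b ⬝ᵥ (E i *ᵥ fun _ => (1 : ℝ)) / (x - lam i));
               -(1 + ∑ i, b ⬝ᵥ (E i *ᵥ fun _ => (1 : ℝ)) / (x - lam i)),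
                 x - ∑ i, (fun _ => (1 : ℝ)) ⬝ᵥ (E i *ᵥ fun _ => (1 : ℝ)) / (x - lam i)] := by
  have hunit := isUnit_det_of_right_inverse (hE.smul_one_sub_mul_sum_inv_smul hx)
  have hsymm (u v : Fin n → ℝ) :
      ∑ i, u ⬝ᵥ (E i *ᵥ v) / (x - lam i) = ∑ i, v ⬝ᵥ (E i *ᵥ u) / (x - lam i) := by
    simp only [fun i => (hE.symm i).dotProduct_mulVec_comm u v]
  rw [det_smul_one_sub_border_border A b _ hunit]
  simp only [Function.comp_def, hE.dotProduct_inv_smul_one_sub_mulVec hx, hsymm (fun _ => 1) b]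

/-- Eq. (6) in the proof of Proposition 5. For `x` not an eigenvalue of `A`,
the characteristic polynomial of the doubly bordered matrix `[[A,b,e],[bᵀ,0,1],[eᵀ,1,0]]`
factors as `det(xI - A)` times an explicit `2 × 2` determinant. -/
theorem det_double_border_eq
    {n m : ℕ} (A : Matrix (Fin n) (Fin n) ℝ) (lam : Fin m → ℝ)
    (E : Fin m → Matrix (Fin n) (Fin n) ℝ) (b : Fin n → ℝ)
    (hA : A.IsSymm) (hE : SpectralDecomp A lam E)
    (x : ℝ) (hx : ∀ i, x ≠ lam i) :
    (x • (1 : Matrix ((Fin n ⊕ Unit) ⊕ Unit) ((Fin n ⊕ Unit) ⊕ Unit) ℝ)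
        - border (border A b) fun _ => (1 : ℝ)).det
      = (x • (1 : Matrix (Fin n) (Fin n) ℝ) - A).det
        * Matrix.det
            !![x - ∑ i, b ⬝ᵥ (E i *ᵥ b) / (x - lam i),
                 -(1 + ∑ i, b ⬝ᵥ (E i *ᵥ fun _ => (1 : ℝ)) / (x - lam i));
               -(1 + ∑ i, b ⬝ᵥ (E i *ᵥ fun _ => (1 : ℝ)) / (x - lam i)),
                 x - ∑ i, (fun _ => (1 : ℝ)) ⬝ᵥ (E i *ᵥ fun _ => (1 : ℝ)) / (x - lam i)] :=
  det_double_border_eq_general A lam E b hE x hx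
end
end

section
/- Let G and H be two n-vertex graphs whose adjacency matrices are written in the block form A(G) = [[A₁, b],[bᵀ, 0]] and A(H) = [[B₁, c],[cᵀ, 0]], where the last vertex of each graph is designated as a root. Then the following are equivalent: (i) G is cospectral with H and G−uₙ is cospectral with H−vₙ; (ii) there exists an (n−1)×(n−1) orthogonal matrix Q such that Qᵀ A₁ Q = B₁ and Qᵀ b = c (equivalently, diag(Qᵀ,1) A(G) diag(Q,1) = A(H)). -/
open Matrix

noncomputable section

/-- The adjacency matrix of the complement graph: `J - I - A`. -/
def complMat {V : Type} [Fintype V] [DecidableEq V] (A : Matrix V V ℝ) : Matrix V V ℝ :=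
  (Matrix.of fun _ _ => (1 : ℝ)) - 1 - A

/-- Two graphs, given by their adjacency matrices, are generalized cospectral if they are
cospectral and their complements are cospectral. -/
def GenCospectral {V : Type} [Fintype V] [DecidableEq V] (A B : Matrix V V ℝ) : Prop :=
  A.charpoly = B.charpoly ∧ (complMat A).charpoly = (complMat B).charpoly

/-!
Diagonalise `A₁ = U D Uᵀ` and `B₁ = V D Vᵀ` by orthogonal matrices; since `A₁` and `B₁` are
cospectral, the same diagonal `D = diag(λ)` serves both. With `u = Uᵀ b` and `v = Vᵀ c`, the Schur
complement gives `χ(border D u)(x) = ∏ (x - λᵢ) * (x - ∑ uᵢ² / (x - λᵢ))`, so cospectrality of the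
bordered matrices says, by uniqueness of partial fractions, that `u` and `v` have the same norm on
every eigenspace of `D`. One reflection per eigenspace then maps `u` to `v` and commutes with `D`.
-/

open Polynomial

section Orthogonal

variable {R : Type*} [CommRing R] {n : Type*} [Fintype n] [DecidableEq n]

theorem charpoly_transpose_mul_mul_of_orthogonal {Q : Matrix n n R} (hQ : Qᵀ * Q = 1)
    (A : Matrix n n R) : (Qᵀ * A * Q).charpoly = A.charpoly := by
  rw [Matrix.mul_assoc, charpoly_mul_comm, Matrix.mul_assoc, mul_eq_one_comm.mp hQ,
    Matrix.mul_one]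

def OrthogonallySimilar (A : Matrix n n R) (b : n → R) (B : Matrix n n R) (c : n → R) : Prop :=
  ∃ Q : Matrix n n R, Qᵀ * Q = 1 ∧ Qᵀ * A * Q = B ∧ Qᵀ *ᵥ b = c

namespace OrthogonallySimilar

variable {A B C : Matrix n n R} {a b c : n → R}

theorem symm (h : OrthogonallySimilar A a B b) : OrthogonallySimilar B b A a := by
  obtain ⟨Q, hQ, rfl, rfl⟩ := h
  have hQ' : Q * Qᵀ = 1 := mul_eq_one_comm.mp hQ
  refine ⟨Qᵀ, by rw [transpose_transpose, hQ'], ?_, ?_⟩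
  · simp only [transpose_transpose, ← Matrix.mul_assoc, hQ', Matrix.one_mul]
    rw [Matrix.mul_assoc, hQ', Matrix.mul_one]
  · rw [transpose_transpose, mulVec_mulVec, hQ', one_mulVec]

theorem trans (h₁ : OrthogonallySimilar A a B b) (h₂ : OrthogonallySimilar B b C c) :
    OrthogonallySimilar A a C c := by
  obtain ⟨Q, hQ, rfl, rfl⟩ := h₁
  obtain ⟨P, hP, rfl, rfl⟩ := h₂
  refine ⟨Q * P, ?_, ?_, ?_⟩
  · rw [transpose_mul, Matrix.mul_assoc, ← Matrix.mul_assoc Qᵀ, hQ, Matrix.one_mul, hP]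
  · simp only [transpose_mul, Matrix.mul_assoc]
  · rw [transpose_mul, mulVec_mulVec]

theorem charpoly_eq (h : OrthogonallySimilar A a B b) : A.charpoly = B.charpoly := by
  obtain ⟨Q, hQ, rfl, -⟩ := h
  exact (charpoly_transpose_mul_mul_of_orthogonal hQ A).symm

end OrthogonallySimilar

end Orthogonal

section Border

variable {n : Type} [Fintype n] [DecidableEq n]

theorem border_transpose_mul_mul (A Q : Matrix n n ℝ) (b : n → ℝ) :
    border (Qᵀ * A * Q) (Qᵀ *ᵥ b) =
      (fromBlocks Q 0 0 1)ᵀ * border A b * fromBlocks Q 0 0 (1 : Matrix Unit Unit ℝ) := by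
  simp only [border, fromBlocks_transpose, fromBlocks_multiply]
  ext (i | i) (j | j) <;> simp [Matrix.mul_apply, mulVec, dotProduct, mul_comm]

theorem OrthogonallySimilar.charpoly_border_eq {A B : Matrix n n ℝ} {b c : n → ℝ}
    (h : OrthogonallySimilar A b B c) : (border A b).charpoly = (border B c).charpoly := by
  obtain ⟨Q, hQ, rfl, rfl⟩ := h
  rw [border_transpose_mul_mul, charpoly_transpose_mul_mul_of_orthogonal]
  simp [fromBlocks_transpose, fromBlocks_multiply, hQ, fromBlocks_one]

end Border

theorem Matrix.IsHermitian.exists_orthogonallySimilar_diagonal {n : Type*} [Fintype n]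
    [DecidableEq n] {A : Matrix n n ℝ} (hA : A.IsHermitian) (b : n → ℝ) :
    ∃ u, OrthogonallySimilar A b (diagonal hA.eigenvalues) u := by
  set U : Matrix n n ℝ := (hA.eigenvectorUnitary : Matrix n n ℝ)
  have hU : star U = Uᵀ := conjTranspose_eq_transpose_of_trivial U
  refine ⟨Uᵀ *ᵥ b, U, ?_, ?_, rfl⟩
  · rw [← hU]; exact Unitary.coe_star_mul_self _
  · rw [← hU]; simpa using hA.conjStarAlgAut_star_eigenvectorUnitary

/-- Uniqueness of partial fractions: clearing denominators gives a polynomial vanishing off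
`Set.range α`, hence zero, and its value at `μ` is the fibre sum times a nonzero constant. -/
theorem sum_fiber_eq_zero_of_sum_div_eq_zero {n : Type*} [Fintype n] {α f : n → ℝ}
    (h : ∀ x ∉ Set.range α, ∑ i, f i / (x - α i) = 0) (μ : ℝ) :
    ∑ i with α i = μ, f i = 0 := by
  set S := Finset.univ.image α
  set p : ℝ[X] := ∑ i, C (f i) * ∏ ν ∈ S.erase (α i), (X - C ν)
  have hp : p = 0 := by
    refine eq_zero_of_infinite_isRoot p ((Set.finite_range α).infinite_compl.mono fun x hx => ?_)
    have hxα : ∀ i, x - α i ≠ 0 := fun i h => hx ⟨i, (sub_eq_zero.mp h).symm⟩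
    have hpx : p.eval x = (∏ ν ∈ S, (x - ν)) * ∑ i, f i / (x - α i) := by
      simp only [p, eval_finsetSum, eval_mul, eval_C, eval_prod, eval_sub, eval_X,
        Finset.mul_sum]
      refine Finset.sum_congr rfl fun i _ => ?_
      rw [← Finset.mul_prod_erase S _ (Finset.mem_image_of_mem α (Finset.mem_univ i))]
      field_simp [hxα i]
    simp [IsRoot, hpx, h x hx]
  by_cases hμ : μ ∈ S
  · set c := ∏ ν ∈ S.erase μ, (μ - ν)
    have hc : c ≠ 0 := Finset.prod_ne_zero_iff.mpr fun ν hν =>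
      sub_ne_zero.mpr (Finset.ne_of_mem_erase hν).symm
    have hterm : ∀ i, f i * ∏ ν ∈ S.erase (α i), (μ - ν) = if α i = μ then f i * c else 0 := by
      intro i
      split_ifs with hi
      · rw [hi]
      · rw [Finset.prod_eq_zero (Finset.mem_erase.mpr ⟨Ne.symm hi, hμ⟩) (sub_self μ), mul_zero]
    have hpμ : p.eval μ = (∑ i with α i = μ, f i) * c := by
      simp only [p, eval_finsetSum, eval_mul, eval_C, eval_prod, eval_sub, eval_X, hterm,
        Finset.sum_mul, Finset.sum_filter, ite_mul, zero_mul]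
    simpa [hp, hc] using hpμ
  · refine Finset.sum_eq_zero fun i hi => absurd ?_ hμ
    exact (Finset.mem_filter.mp hi).2 ▸ Finset.mem_image_of_mem α (Finset.mem_univ i)

section FiberProjection

variable {n β : Type*} [Fintype n] [DecidableEq β]

/-- The orthogonal projection onto the span of the restrictions of `w` to the fibres of `α`
(a fibre on which `w` vanishes contributes `0`, via `x / 0 = 0`), so that
`1 - 2 • fiberProj α w` is the product of the reflections along these restrictions. -/
def fiberProj (α : n → β) (w : n → ℝ) : Matrix n n ℝ :=
  of fun i j => if α i = α j then w i * w j / ∑ k with α k = α i, w k ^ 2 else 0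

theorem fiberProj_transpose (α : n → β) (w : n → ℝ) : (fiberProj α w)ᵀ = fiberProj α w := by
  ext i j
  by_cases h : α i = α j
  · simp [fiberProj, h, mul_comm]
  · simp [fiberProj, h, Ne.symm h]

theorem fiberProj_mul_self (α : n → β) (w : n → ℝ) :
    fiberProj α w * fiberProj α w = fiberProj α w := by
  ext i j
  set N := ∑ k with α k = α i, w k ^ 2
  by_cases hij : α i = α j
  · have hterm : ∀ k, fiberProj α w i k * fiberProj α w k j =
        if α k = α i then w i * w j / (N * N) * w k ^ 2 else 0 := by
      intro k
      by_cases hk : α k = α i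
      · rw [fiberProj, of_apply, of_apply, if_pos hk.symm, if_pos (hk.trans hij), if_pos hk, hk]
        ring
      · simp [fiberProj, hk, Ne.symm hk]
    rw [mul_apply, Finset.sum_congr rfl fun k _ => hterm k, ← Finset.sum_filter,
      ← Finset.mul_sum]
    change w i * w j / (N * N) * N = if α i = α j then w i * w j / N else 0
    rw [if_pos hij]
    by_cases hN : N = 0
    · simp [hN]
    · field_simp
  · refine (Finset.sum_eq_zero fun k _ => ?_).trans (by simp [fiberProj, hij])
    by_cases hk : α i = α k
    · simp [fiberProj, hk ▸ hij]
    · simp [fiberProj, hk]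

theorem fiberProj_mul_diagonal [DecidableEq n] (α w : n → ℝ) :
    fiberProj α w * diagonal α = diagonal α * fiberProj α w := by
  ext i j
  by_cases h : α i = α j
  · simp [fiberProj, h, mul_comm]
  · simp [fiberProj, h]

theorem two_smul_fiberProj_sub_mulVec {α : n → β} {u v : n → ℝ}
    (h : ∀ μ, ∑ i with α i = μ, u i ^ 2 = ∑ i with α i = μ, v i ^ 2) :
    (2 : ℝ) • (fiberProj α (u - v) *ᵥ u) = u - v := by
  ext i
  set w := u - v
  set N := ∑ k with α k = α i, w k ^ 2
  have hN : 2 * ∑ k with α k = α i, w k * u k = N := by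
    have hfiber : ∑ k with α k = α i, (2 * (w k * u k) - w k ^ 2) =
        ∑ k with α k = α i, (u k ^ 2 - v k ^ 2) :=
      Finset.sum_congr rfl fun k _ => by simp only [w, Pi.sub_apply]; ring
    rw [Finset.sum_sub_distrib, Finset.sum_sub_distrib, h, sub_self, ← Finset.mul_sum,
      sub_eq_zero] at hfiber
    exact hfiber
  have hPu : (fiberProj α w *ᵥ u) i = w i / N * ∑ k with α k = α i, w k * u k := by
    simp only [mulVec, dotProduct, fiberProj, of_apply, Finset.mul_sum]
    conv_rhs => rw [Finset.sum_filter]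
    refine Finset.sum_congr rfl fun k _ => ?_
    by_cases hk : α k = α i
    · simp only [hk, if_true, N]; ring
    · simp [Ne.symm hk, hk]
  rw [Pi.smul_apply, hPu, smul_eq_mul, mul_left_comm, hN]
  by_cases hN0 : N = 0
  · have hwi : w i ^ 2 = 0 := (Finset.sum_eq_zero_iff_of_nonneg fun k _ => sq_nonneg (w k)).mp
      hN0 i (by simp)
    simp [pow_eq_zero_iff two_ne_zero |>.mp hwi]
  · exact div_mul_cancel₀ (w i) hN0

end FiberProjection

section Diagonal

variable {n : Type} [Fintype n] [DecidableEq n]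

theorem eval_charpoly_border_diagonal (α u : n → ℝ) {x : ℝ} (hx : x ∉ Set.range α) :
    (border (diagonal α) u).charpoly.eval x =
      (∏ i, (x - α i)) * (x - ∑ i, u i ^ 2 / (x - α i)) := by
  have hxα : ∀ i, x - α i ≠ 0 := fun i h => hx ⟨i, (sub_eq_zero.mp h).symm⟩
  have hsplit : scalar (n ⊕ Unit) x - border (diagonal α) u =
      fromBlocks (diagonal fun i => x - α i) (of fun i _ => -u i) (of fun _ j => -u j)
        (of fun _ _ => x) := by
    ext (i | i) (j | j)
    · by_cases h : i = j <;> simp [border, h]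
    all_goals simp [border]
  let _ : Invertible (diagonal fun i => x - α i) :=
    ⟨diagonal fun i => (x - α i)⁻¹, by simp [hxα], by simp [hxα]⟩
  rw [eval_charpoly, hsplit, det_fromBlocks₁₁, det_diagonal, det_unique,
    show ⅟(diagonal fun i => x - α i) = diagonal fun i => (x - α i)⁻¹ from rfl]
  congr 1
  simp [mul_apply, diagonal_apply, div_eq_mul_inv, sq, mul_assoc, mul_comm (u _)]

theorem orthogonallySimilar_diagonal_of_sum_fiber_sq_eq {α u v : n → ℝ}
    (h : ∀ μ, ∑ i with α i = μ, u i ^ 2 = ∑ i with α i = μ, v i ^ 2) :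
    OrthogonallySimilar (diagonal α) u (diagonal α) v := by
  set P := fiberProj α (u - v)
  have hT : (1 - (2 : ℝ) • P)ᵀ = 1 - (2 : ℝ) • P := by
    rw [transpose_sub, transpose_one, transpose_smul, fiberProj_transpose]
  have hTT : (1 - (2 : ℝ) • P) * (1 - (2 : ℝ) • P) = 1 := by
    have hPP : P * P = P := fiberProj_mul_self α (u - v)
    calc (1 - (2 : ℝ) • P) * (1 - (2 : ℝ) • P) = 1 - (4 : ℝ) • P + (4 : ℝ) • (P * P) := by
          simp only [sub_mul, mul_sub, smul_mul_smul_comm, one_mul, mul_one]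
          module
      _ = 1 := by rw [hPP, sub_add_cancel]
  have hTD : (1 - (2 : ℝ) • P) * diagonal α = diagonal α * (1 - (2 : ℝ) • P) := by
    rw [sub_mul, mul_sub, one_mul, mul_one, Matrix.smul_mul, Matrix.mul_smul,
      fiberProj_mul_diagonal]
  refine ⟨1 - (2 : ℝ) • P, by rw [hT, hTT], ?_, ?_⟩
  · rw [hT, hTD, Matrix.mul_assoc, hTT, Matrix.mul_one]
  · rw [hT, sub_mulVec, one_mulVec, smul_mulVec, two_smul_fiberProj_sub_mulVec h, sub_sub_cancel]

theorem orthogonallySimilar_diagonal_of_charpoly_border_eq {α u v : n → ℝ}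
    (h : (border (diagonal α) u).charpoly = (border (diagonal α) v).charpoly) :
    OrthogonallySimilar (diagonal α) u (diagonal α) v := by
  refine orthogonallySimilar_diagonal_of_sum_fiber_sq_eq fun μ => sub_eq_zero.mp ?_
  rw [← Finset.sum_sub_distrib]
  refine sum_fiber_eq_zero_of_sum_div_eq_zero (fun x hx => ?_) μ
  have hprod : ∏ i, (x - α i) ≠ 0 :=
    Finset.prod_ne_zero_iff.mpr fun i _ => sub_ne_zero.mpr fun h => hx ⟨i, h.symm⟩
  have heval := congrArg (eval x) h
  rw [eval_charpoly_border_diagonal α u hx, eval_charpoly_border_diagonal α v hx] at heval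
  simp only [sub_div, Finset.sum_sub_distrib]
  linarith [mul_left_cancel₀ hprod heval]

end Diagonal

theorem rooted_cospectral_iff_exists_orthogonal_general
    {m : ℕ} (A₁ B₁ : Matrix (Fin m) (Fin m) ℝ) (b c : Fin m → ℝ)
    (hA₁ : A₁.IsAdjMatrix) (hB₁ : B₁.IsAdjMatrix) :
    ((border A₁ b).charpoly = (border B₁ c).charpoly ∧ A₁.charpoly = B₁.charpoly) ↔
      ∃ Q : Matrix (Fin m) (Fin m) ℝ,
        Qᵀ * Q = 1 ∧ Qᵀ * A₁ * Q = B₁ ∧ Qᵀ *ᵥ b = c := by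
  refine ⟨fun ⟨hborder, hcharpoly⟩ => ?_, fun (h : OrthogonallySimilar A₁ b B₁ c) =>
    ⟨h.charpoly_border_eq, h.charpoly_eq⟩⟩
  have hA : A₁.IsHermitian := isHermitian_iff_isSymm.mpr hA₁.symm
  have hB : B₁.IsHermitian := isHermitian_iff_isSymm.mpr hB₁.symm
  obtain ⟨u, hu⟩ := hA.exists_orthogonallySimilar_diagonal b
  obtain ⟨v, hv⟩ := hB.exists_orthogonallySimilar_diagonal c
  rw [← (hA.eigenvalues_eq_eigenvalues_iff hB).mpr hcharpoly] at hv
  have huv : OrthogonallySimilar (diagonal hA.eigenvalues) u _ v :=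
    orthogonallySimilar_diagonal_of_charpoly_border_eq <| by
      rw [← hu.charpoly_border_eq, ← hv.charpoly_border_eq, hborder]
  exact hu.trans (huv.trans hv.symm)

/-- rooted cospectrality, Schwenk / Liu. `(G, uₙ)` and `(H, vₙ)` are
cospectral rooted graphs iff there is an orthogonal matrix `Q` with `Qᵀ A₁ Q = B₁` and
`Qᵀ b = c`. -/
theorem rooted_cospectral_iff_exists_orthogonal
    {m : ℕ} (A₁ B₁ : Matrix (Fin m) (Fin m) ℝ) (b c : Fin m → ℝ)
    (hA₁ : A₁.IsAdjMatrix) (hB₁ : B₁.IsAdjMatrix)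
    (hb : ∀ i, b i = 0 ∨ b i = 1) (hc : ∀ i, c i = 0 ∨ c i = 1) :
    ((border A₁ b).charpoly = (border B₁ c).charpoly ∧ A₁.charpoly = B₁.charpoly) ↔
      ∃ Q : Matrix (Fin m) (Fin m) ℝ,
        Qᵀ * Q = 1 ∧ Qᵀ * A₁ * Q = B₁ ∧ Qᵀ *ᵥ b = c :=
  rooted_cospectral_iff_exists_orthogonal_general A₁ B₁ b c hA₁ hB₁
end
end

section
/- Two n-vertex graphs G and H are generalized cospectral if and only if there exists an n×n regular orthogonal matrix Q such that Qᵀ A(G) Q = A(H). -/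
/-!
Compare `A` and `B` in orthonormal eigenbases. If `Uᵀ A U = D = Wᵀ B W` with `D = diagonal d`,
then `Uᵀ (J - I - A) U = u uᵀ - I - D` with `u = Uᵀ 1`, and by the matrix determinant lemma its
characteristic polynomial is `∏ (x - cᵢ) * (1 - ∑ uᵢ² / (x - cᵢ))`, where `cᵢ = -1 - dᵢ`.
Comparing partial fractions, equal complement spectra say exactly that `u` and `w = Wᵀ 1` have
the same norm on every eigenspace of `D`. A reflection inside each eigenspace then maps `w` to `u`
and commutes with `D`, and `Q = U R Wᵀ` is the required regular orthogonal matrix. Conversely, a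
regular orthogonal `Q` fixes `J`, so it conjugates the complement of `A` into that of `B`.
-/

open Matrix

noncomputable section

open Polynomial Finset

section Orthogonal

variable {ι R : Type*} [Fintype ι] [CommRing R]

theorem transpose_mul_vecMulVec_mul (Q : Matrix ι ι R) (a b : ι → R) :
    Qᵀ * vecMulVec a b * Q = vecMulVec (Qᵀ *ᵥ a) (Qᵀ *ᵥ b) := by
  rw [mul_vecMulVec, vecMulVec_mul, mulVec_transpose, mulVec_transpose]

theorem charpoly_transpose_mul_mul [DecidableEq ι] {Q : Matrix ι ι R} (hQ : Qᵀ * Q = 1)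
    (M : Matrix ι ι R) : (Qᵀ * M * Q).charpoly = M.charpoly := by
  rw [charpoly_mul_comm, ← Matrix.mul_assoc, mul_eq_one_comm.1 hQ, one_mul]

end Orthogonal

theorem Matrix.IsHermitian.exists_transpose_mul_mul_eq_diagonal {ι : Type*} [Fintype ι]
    [DecidableEq ι] {A : Matrix ι ι ℝ} (hA : A.IsHermitian) :
    ∃ U : Matrix ι ι ℝ, Uᵀ * U = 1 ∧ Uᵀ * A * U = diagonal hA.eigenvalues := by
  set U : Matrix ι ι ℝ := (hA.eigenvectorUnitary : Matrix ι ι ℝ)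
  have hstar : star U = Uᵀ := by
    rw [star_eq_conjTranspose, conjTranspose_eq_transpose_of_trivial]
  refine ⟨U, ?_, ?_⟩
  · rw [← hstar]
    exact Unitary.coe_star_mul_self _
  · have hdiag := hA.conjStarAlgAut_star_eigenvectorUnitary
    rw [Unitary.conjStarAlgAut_star_apply, hstar] at hdiag
    simpa using hdiag

section Secular

variable {ι K : Type*} [Fintype ι] [Field K]

theorem det_diagonal_sub_vecMulVec [DecidableEq ι] {c : ι → K} (hc : ∀ i, c i ≠ 0)
    (u v : ι → K) :
    det (diagonal c - vecMulVec u v) = (∏ i, c i) * (1 - ∑ i, u i * v i / c i) := by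
  have hfactor : diagonal c - vecMulVec u v =
      diagonal c * (1 + vecMulVec (fun i => -(u i / c i)) v) := by
    rw [Matrix.mul_add, mul_one, mul_vecMulVec, sub_eq_add_neg, ← neg_vecMulVec]
    congr 3
    ext i
    simp [mulVec_diagonal, mul_div_cancel₀ _ (hc i)]
  rw [hfactor, det_mul, det_diagonal, vecMulVec_eq Unit, det_one_add_replicateCol_mul_replicateRow]
  rw [dotProduct, sub_eq_add_neg, ← sum_neg_distrib]
  congr 2
  exact sum_congr rfl fun i _ => by ring

theorem eval_charpoly_diagonal_add_vecMulVec [DecidableEq ι] (c u v : ι → K) {x : K}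
    (hx : ∀ i, x ≠ c i) :
    (diagonal c + vecMulVec u v).charpoly.eval x
      = (∏ i, (x - c i)) * (1 - ∑ i, u i * v i / (x - c i)) := by
  rw [eval_charpoly, ← det_diagonal_sub_vecMulVec (fun i => sub_ne_zero.2 (hx i)), ← diagonal_sub,
    scalar_apply, sub_add_eq_sub_sub]

theorem eq_zero_of_sum_div_sub_eq_zero [DecidableEq K] [Infinite K] {S : Finset K} {F : K → K}
    (h : ∀ x ∉ S, ∑ ν ∈ S, F ν / (x - ν) = 0) {μ : K} (hμ : μ ∈ S) : F μ = 0 := by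
  -- Clearing denominators gives a polynomial vanishing off `S`, hence zero; at `μ` only the
  -- `μ`-th term survives.
  set P : K[X] := ∑ ν ∈ S, C (F ν) * ∏ κ ∈ S.erase ν, (X - C κ)
  have hP : P = 0 := by
    refine eq_zero_of_infinite_isRoot P ((S : Set K).toFinite.infinite_compl.mono fun x hx => ?_)
    have heval : P.eval x = (∏ κ ∈ S, (x - κ)) * ∑ ν ∈ S, F ν / (x - ν) := by
      simp only [P, eval_finsetSum, eval_mul, eval_C, eval_prod, eval_sub, eval_X, mul_sum]
      refine sum_congr rfl fun ν hν => ?_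
      have hxν : x - ν ≠ 0 := sub_ne_zero.2 fun hxν => hx (hxν ▸ hν)
      rw [← mul_prod_erase S _ hν]
      field_simp
    rw [Set.mem_ofPred_eq, IsRoot, heval, h x hx, mul_zero]
  have hPμ : P.eval μ = F μ * ∏ κ ∈ S.erase μ, (μ - κ) := by
    simp only [P, eval_finsetSum, eval_mul, eval_C, eval_prod, eval_sub, eval_X]
    refine sum_eq_single μ (fun ν _ hne => ?_) (absurd hμ)
    rw [prod_eq_zero (mem_erase.2 ⟨hne.symm, hμ⟩) (sub_self μ), mul_zero]
  have hprod : ∏ κ ∈ S.erase μ, (μ - κ) ≠ 0 :=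
    prod_ne_zero_iff.2 fun κ hκ => sub_ne_zero.2 (ne_of_mem_erase hκ).symm
  rw [hP, eval_zero, eq_comm, mul_eq_zero] at hPμ
  exact hPμ.resolve_right hprod

theorem sum_fiber_eq_of_sum_div_sub_eq [DecidableEq K] [Infinite K] {c a b : ι → K}
    (h : ∀ x, (∀ i, x ≠ c i) → ∑ i, a i / (x - c i) = ∑ i, b i / (x - c i)) (μ : K) :
    ∑ i with c i = μ, a i = ∑ i with c i = μ, b i := by
  have hc : ∀ i, c i ∈ univ.image c := fun i => mem_image_of_mem c (mem_univ i)
  rw [← sub_eq_zero, ← sum_sub_distrib]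
  by_cases hμ : μ ∈ univ.image c
  swap
  · exact sum_eq_zero fun i hi => absurd ((mem_filter.1 hi).2 ▸ hc i) hμ
  refine eq_zero_of_sum_div_sub_eq_zero (F := fun ν => ∑ i with c i = ν, (a i - b i))
    (fun x hx => ?_) hμ
  have hx' : ∀ i, x ≠ c i := fun i hxi => hx (hxi ▸ hc i)
  calc ∑ ν ∈ univ.image c, (∑ i with c i = ν, (a i - b i)) / (x - ν)
      = ∑ i, (a i - b i) / (x - c i) := by
        rw [← sum_fiberwise_of_maps_to (g := c) fun i _ => hc i]
        refine sum_congr rfl fun ν _ => ?_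
        rw [sum_div]
        exact sum_congr rfl fun i hi => by rw [(mem_filter.1 hi).2]
    _ = 0 := by simp only [sub_div, sum_sub_distrib, h x hx', sub_self]

end Secular

section BlockReflection

variable {ι α K : Type*} [Fintype ι] [DecidableEq α] [Field K]

/-- The orthogonal projection onto the span of the restrictions of `v` to the fibres of `d`; on a
fibre where `v` vanishes the denominator is `0`, and `x / 0 = 0` makes that block zero. -/
def blockProjection (d : ι → α) (v : ι → K) : Matrix ι ι K :=
  of fun i j => if d i = d j then v i * v j / ∑ k with d k = d i, v k ^ 2 else 0

theorem blockProjection_transpose (d : ι → α) (v : ι → K) :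
    (blockProjection d v)ᵀ = blockProjection d v := by
  ext i j
  simp only [blockProjection, transpose_apply, of_apply]
  by_cases hij : d i = d j
  · rw [if_pos hij.symm, if_pos hij, hij, mul_comm (v j)]
  · rw [if_neg (Ne.symm hij), if_neg hij]

theorem blockProjection_mul_self (d : ι → α) (v : ι → K) :
    blockProjection d v * blockProjection d v = blockProjection d v := by
  ext i j
  simp only [blockProjection, mul_apply, of_apply]
  by_cases hij : d i = d j
  · set N := ∑ k with d k = d i, v k ^ 2
    have hterm : ∀ k, (if d i = d k then v i * v k / N else 0) *
        (if d k = d j then v k * v j / ∑ l with d l = d k, v l ^ 2 else 0)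
          = if d k = d i then v i * v j / N ^ 2 * v k ^ 2 else 0 := by
      intro k
      by_cases hk : d k = d i
      · rw [if_pos hk.symm, if_pos (hk.trans hij), if_pos hk, hk]
        ring
      · rw [if_neg (Ne.symm hk), if_neg hk, zero_mul]
    rw [sum_congr rfl fun k _ => hterm k, ← sum_filter, ← mul_sum, if_pos hij]
    rcases eq_or_ne N 0 with hN | hN
    · simp [hN]
    · field_simp
      rfl
  · refine (sum_eq_zero fun k _ => ?_).trans (if_neg hij).symm
    by_cases hk : d i = d k
    · rw [if_neg fun h => hij (hk.trans h), mul_zero]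
    · rw [if_neg hk, zero_mul]

theorem blockProjection_commute_diagonal [DecidableEq ι] [DecidableEq K] (d v : ι → K) :
    Commute (blockProjection d v) (diagonal d) := by
  ext i j
  simp only [blockProjection, mul_diagonal, diagonal_mul, of_apply]
  split_ifs with hij
  · rw [hij, mul_comm]
  · simp

theorem blockProjection_sub_mulVec [LinearOrder K] [IsStrictOrderedRing K] {d : ι → α}
    {u w : ι → K}
    (h : ∀ μ, ∑ i with d i = μ, u i ^ 2 = ∑ i with d i = μ, w i ^ 2) :
    blockProjection d (u - w) *ᵥ w = (-2⁻¹ : K) • (u - w) := by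
  ext i
  set v := u - w
  set N := ∑ k with d k = d i, v k ^ 2
  have hvw : ∑ k with d k = d i, v k * w k = -(N / 2) := by
    have hsum : ∑ k with d k = d i, (2 * (v k * w k) + v k ^ 2) = 0 := by
      rw [← sub_eq_zero.2 (h (d i)), ← sum_sub_distrib]
      exact sum_congr rfl fun k _ => by simp only [v, Pi.sub_apply]; ring
    rw [sum_add_distrib, ← mul_sum] at hsum
    linear_combination hsum / 2
  have hcalc : (blockProjection d v *ᵥ w) i = v i / N * -(N / 2) := by
    simp only [blockProjection, mulVec, dotProduct, of_apply, ite_mul, zero_mul]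
    rw [← hvw, mul_sum, ← sum_filter]
    refine sum_congr (filter_congr fun k _ => eq_comm) fun k _ => by ring
  rw [hcalc]
  rcases eq_or_ne N 0 with hN | hN
  · have hvi : v i = 0 := by
      have := (sum_eq_zero_iff_of_nonneg fun k _ => sq_nonneg (v k)).1 hN i (by simp)
      exact pow_eq_zero_iff two_ne_zero |>.1 this
    simp [hvi]
  · rw [Pi.smul_apply, smul_eq_mul]
    field_simp

theorem exists_orthogonal_commute_diagonal_mulVec_eq [DecidableEq ι] [DecidableEq K]
    [LinearOrder K] [IsStrictOrderedRing K] {d u w : ι → K}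
    (h : ∀ μ, ∑ i with d i = μ, u i ^ 2 = ∑ i with d i = μ, w i ^ 2) :
    ∃ R : Matrix ι ι K, Rᵀ * R = 1 ∧ Commute R (diagonal d) ∧ R *ᵥ w = u := by
  set P := blockProjection d (u - w)
  refine ⟨1 - (2 : K) • P, ?_, ?_, ?_⟩
  · have hPt : Pᵀ = P := blockProjection_transpose d (u - w)
    have hPP : P * P = P := blockProjection_mul_self d (u - w)
    simp only [transpose_sub, transpose_one, transpose_smul, hPt, sub_mul, mul_sub, one_mul,
      mul_one, smul_mul_assoc, mul_smul_comm, hPP]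
    module
  · exact (Commute.one_left _).sub_left ((blockProjection_commute_diagonal d _).smul_left 2)
  · rw [sub_mulVec, one_mulVec, smul_mulVec, blockProjection_sub_mulVec h, smul_smul]
    module

end BlockReflection

section Complement

variable {ι : Type} [Fintype ι] [DecidableEq ι]

theorem complMat_eq_vecMulVec (A : Matrix ι ι ℝ) : complMat A = vecMulVec 1 1 - 1 - A := by
  rw [complMat]
  congr 2
  ext
  simp [vecMulVec_apply]

theorem transpose_mul_complMat_mul {Q : Matrix ι ι ℝ} (hQ : Qᵀ * Q = 1) (A : Matrix ι ι ℝ) :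
    Qᵀ * complMat A * Q = vecMulVec (Qᵀ *ᵥ 1) (Qᵀ *ᵥ 1) - 1 - Qᵀ * A * Q := by
  rw [complMat_eq_vecMulVec, Matrix.mul_sub, Matrix.mul_sub, Matrix.sub_mul, Matrix.sub_mul,
    transpose_mul_vecMulVec_mul, mul_one, hQ]

theorem genCospectral_transpose_mul_mul {Q : Matrix ι ι ℝ} (hQ : Qᵀ * Q = 1) (hQe : Q *ᵥ 1 = 1)
    (A : Matrix ι ι ℝ) : GenCospectral A (Qᵀ * A * Q) := by
  have hQte : Qᵀ *ᵥ 1 = 1 :=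
    calc Qᵀ *ᵥ 1 = Qᵀ *ᵥ (Q *ᵥ 1) := by rw [hQe]
      _ = 1 := by rw [mulVec_mulVec, hQ, one_mulVec]
  refine ⟨(charpoly_transpose_mul_mul hQ A).symm, ?_⟩
  rw [← charpoly_transpose_mul_mul hQ (complMat A), transpose_mul_complMat_mul hQ, hQte,
    complMat_eq_vecMulVec]

theorem charpoly_complMat_eq_of_transpose_mul_mul_eq_diagonal {A U : Matrix ι ι ℝ} {d : ι → ℝ}
    (hU : Uᵀ * U = 1) (hUA : Uᵀ * A * U = diagonal d) :
    (complMat A).charpoly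
      = (diagonal (fun i => -1 - d i) + vecMulVec (Uᵀ *ᵥ 1) (Uᵀ *ᵥ 1)).charpoly := by
  rw [← charpoly_transpose_mul_mul hU, transpose_mul_complMat_mul hU, hUA]
  congr 1
  ext i j
  by_cases hij : i = j
  · subst hij
    simp only [Matrix.sub_apply, Matrix.add_apply, one_apply_eq, diagonal_apply_eq]
    ring
  · simp [diagonal_apply_ne _ hij, one_apply_ne hij]

theorem sum_fiber_sq_eq_of_charpoly_complMat_eq {A B U W : Matrix ι ι ℝ} {d : ι → ℝ}
    (hU : Uᵀ * U = 1) (hUA : Uᵀ * A * U = diagonal d)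
    (hW : Wᵀ * W = 1) (hWB : Wᵀ * B * W = diagonal d)
    (h : (complMat A).charpoly = (complMat B).charpoly) (μ : ℝ) :
    ∑ i with d i = μ, (Uᵀ *ᵥ 1) i ^ 2 = ∑ i with d i = μ, (Wᵀ *ᵥ 1) i ^ 2 := by
  have hsecular : ∀ x, (∀ i, x ≠ -1 - d i) →
      ∑ i, (Uᵀ *ᵥ 1) i * (Uᵀ *ᵥ 1) i / (x - (-1 - d i))
        = ∑ i, (Wᵀ *ᵥ 1) i * (Wᵀ *ᵥ 1) i / (x - (-1 - d i)) := by
    intro x hx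
    have heval := congrArg (eval x) h
    rw [charpoly_complMat_eq_of_transpose_mul_mul_eq_diagonal hU hUA,
      charpoly_complMat_eq_of_transpose_mul_mul_eq_diagonal hW hWB,
      eval_charpoly_diagonal_add_vecMulVec _ _ _ hx,
      eval_charpoly_diagonal_add_vecMulVec _ _ _ hx] at heval
    have hprod : ∏ i, (x - (-1 - d i)) ≠ 0 := prod_ne_zero_iff.2 fun i _ => sub_ne_zero.2 (hx i)
    exact sub_right_inj.1 (mul_left_cancel₀ hprod heval)
  simpa only [sub_right_inj, sq] using sum_fiber_eq_of_sum_div_sub_eq hsecular (-1 - μ)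

theorem exists_regular_orthogonal_of_genCospectral {A B : Matrix ι ι ℝ} (hA : A.IsHermitian)
    (hB : B.IsHermitian) (h : GenCospectral A B) :
    ∃ Q : Matrix ι ι ℝ, Qᵀ * Q = 1 ∧ Q *ᵥ 1 = 1 ∧ Qᵀ * A * Q = B := by
  obtain ⟨hchar, hcompl⟩ := h
  obtain ⟨U, hU, hUA⟩ := hA.exists_transpose_mul_mul_eq_diagonal
  obtain ⟨W, hW, hWB⟩ := hB.exists_transpose_mul_mul_eq_diagonal
  rw [← (hA.eigenvalues_eq_eigenvalues_iff hB).2 hchar] at hWB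
  obtain ⟨R, hR, hRd, hRw⟩ := exists_orthogonal_commute_diagonal_mulVec_eq
    (sum_fiber_sq_eq_of_charpoly_complMat_eq hU hUA hW hWB hcompl)
  have hUt : U * Uᵀ = 1 := mul_eq_one_comm.1 hU
  have hWt : W * Wᵀ = 1 := mul_eq_one_comm.1 hW
  refine ⟨U * R * Wᵀ, ?_, ?_, ?_⟩
  · calc (U * R * Wᵀ)ᵀ * (U * R * Wᵀ) = W * (Rᵀ * (Uᵀ * U) * R) * Wᵀ := by
          simp only [transpose_mul, transpose_transpose, Matrix.mul_assoc]
      _ = 1 := by rw [hU, mul_one, hR, mul_one, hWt]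
  · rw [← mulVec_mulVec, ← mulVec_mulVec, hRw, mulVec_mulVec, hUt, one_mulVec]
  · calc (U * R * Wᵀ)ᵀ * A * (U * R * Wᵀ) = W * (Rᵀ * (Uᵀ * A * U) * R) * Wᵀ := by
          simp only [transpose_mul, transpose_transpose, Matrix.mul_assoc]
      _ = W * (Rᵀ * (R * diagonal hA.eigenvalues)) * Wᵀ := by
          rw [hUA, Matrix.mul_assoc Rᵀ, ← hRd.eq]
      _ = W * (Wᵀ * B * W) * Wᵀ := by rw [← Matrix.mul_assoc Rᵀ R, hR, one_mul, hWB]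
      _ = B := by
          rw [← Matrix.mul_assoc W, ← Matrix.mul_assoc W, hWt, one_mul, Matrix.mul_assoc, hWt,
            mul_one]

end Complement

/-- Johnson–Newman. Two graphs are generalized cospectral iff there is a
regular orthogonal matrix `Q` with `Qᵀ A(G) Q = A(H)`. -/
theorem genCospectral_iff_exists_regular_orthogonal
    {n : ℕ} (A B : Matrix (Fin n) (Fin n) ℝ)
    (hA : A.IsAdjMatrix) (hB : B.IsAdjMatrix) :
    GenCospectral A B ↔
      ∃ Q : Matrix (Fin n) (Fin n) ℝ,
        Qᵀ * Q = 1 ∧ (Q *ᵥ fun _ => (1 : ℝ)) = (fun _ => 1) ∧ Qᵀ * A * Q = B := by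
  refine ⟨exists_regular_orthogonal_of_genCospectral (isHermitian_iff_isSymm.2 hA.symm)
    (isHermitian_iff_isSymm.2 hB.symm), ?_⟩
  rintro ⟨Q, hQ, hQe, rfl⟩
  exact genCospectral_transpose_mul_mul hQ hQe A
end
end

section
/- Let G be an n-vertex almost controllable graph with adjacency matrix A, let ξ be any nonzero vector satisfying W(G)ᵀξ = 0 (such a vector exists and is unique up to nonzero scalar multiples since rank W(G) = n−1), and set Q₀ = I − 2ξξᵀ/(ξᵀξ). Then the set of regular orthogonal matrices Q satisfying Qᵀ A Q = A is exactly {I, Q₀}. -/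
open Matrix

noncomputable section

/-- The walk matrix `W(G) = [e, Ae, …, A^{n-1}e]` of an `n × n` matrix `A`. -/
def walkMatrix {n : ℕ} (A : Matrix (Fin n) (Fin n) ℝ) : Matrix (Fin n) (Fin n) ℝ :=
  Matrix.of fun i j => (A ^ (j : ℕ) *ᵥ fun _ => (1 : ℝ)) i

/-- The Householder matrix `Q₀ = I - 2ξξᵀ/(ξᵀξ)` associated with a vector `ξ`. -/
def householder {n : ℕ} (ξ : Fin n → ℝ) : Matrix (Fin n) (Fin n) ℝ :=
  1 - (2 / (ξ ⬝ᵥ ξ)) • vecMulVec ξ ξ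

section Aux
variable {n : ℕ} {A : Matrix (Fin n) (Fin n) ℝ} {ξ : Fin n → ℝ}

lemma walk_tmv {n : ℕ} (A : Matrix (Fin n) (Fin n) ℝ) (ξ : Fin n → ℝ) (j : Fin n) :
    ((walkMatrix A)ᵀ *ᵥ ξ) j = (A ^ (j:ℕ) *ᵥ fun _ => (1:ℝ)) ⬝ᵥ ξ := by
  simp [walkMatrix, mulVec, transpose_apply, dotProduct]

lemma pow_card {n : ℕ} (A : Matrix (Fin n) (Fin n) ℝ) :
    A ^ n = - ∑ i ∈ Finset.range n, A.charpoly.coeff i • A ^ i := by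
  have h := A.aeval_self_charpoly
  have hdeg : A.charpoly.natDegree = n := by
    simpa using A.charpoly_natDegree_eq_dim
  have hc : A.charpoly.coeff n = 1 := by
    have hm := A.charpoly_monic
    rw [Polynomial.Monic, Polynomial.leadingCoeff, hdeg] at hm; exact hm
  rw [Polynomial.aeval_eq_sum_range, hdeg, Finset.sum_range_succ, hc, one_smul] at h
  exact eq_neg_of_add_eq_zero_right h

section Main
variable {n : ℕ} {A : Matrix (Fin n) (Fin n) ℝ} {ξ : Fin n → ℝ}

lemma sum_mulVecJ {ι : Type*} (s : Finset ι) (f : ι → Matrix (Fin n) (Fin n) ℝ) (v : Fin n → ℝ) :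
    (∑ i ∈ s, f i) *ᵥ v = ∑ i ∈ s, f i *ᵥ v := by
  ext j
  simp only [mulVec, dotProduct, Matrix.sum_apply, Finset.sum_apply, Finset.sum_mul]
  rw [Finset.sum_comm]

lemma sum_dotProductJ {ι : Type*} (s : Finset ι) (f : ι → Fin n → ℝ) (v : Fin n → ℝ) :
    (∑ i ∈ s, f i) ⬝ᵥ v = ∑ i ∈ s, f i ⬝ᵥ v := by
  simp only [dotProduct, Finset.sum_apply, Finset.sum_mul]
  rw [Finset.sum_comm]

/-- key: ξ is orthogonal to all A^k e -/
lemma dot_pow (hker : (walkMatrix A)ᵀ *ᵥ ξ = 0) (k : ℕ) :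
    (A ^ k *ᵥ fun _ => (1:ℝ)) ⬝ᵥ ξ = 0 := by
  induction k using Nat.strong_induction_on with
  | _ k ih =>
    rcases lt_or_ge k n with hk | hk
    · have := congrFun hker ⟨k, hk⟩
      rwa [walk_tmv] at this
    · have hsplit : A ^ k = (- ∑ i ∈ Finset.range n, A.charpoly.coeff i • A ^ i) * A ^ (k - n) := by
        rw [← pow_card, ← pow_add]
        congr 1
        omega
      rw [hsplit, neg_mul, neg_mulVec, neg_dotProduct, neg_eq_zero, Finset.sum_mul,
        sum_mulVecJ, sum_dotProductJ]
      refine Finset.sum_eq_zero fun i hi => ?_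
      rw [smul_mul_assoc, ← pow_add, smul_mulVec, smul_dotProduct,
        ih (i + (k - n)) (by simp at hi; omega), smul_zero]

lemma n_pos (hξ : ξ ≠ 0) : 0 < n := by
  rcases Nat.eq_zero_or_pos n with h | h
  · subst h; exact absurd (funext fun i => i.elim0 : ξ = 0) hξ
  · exact h

lemma ker_eq_span (hrank : (walkMatrix A).rank = n - 1) (hξ : ξ ≠ 0)
    (hker : (walkMatrix A)ᵀ *ᵥ ξ = 0) :
    LinearMap.ker (walkMatrix A)ᵀ.mulVecLin = Submodule.span ℝ {ξ} := by
  have hn : 0 < n := n_pos hξ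
  have hmem : ξ ∈ LinearMap.ker (walkMatrix A)ᵀ.mulVecLin := by
    rw [LinearMap.mem_ker, mulVecLin_apply]; exact hker
  have hle : Submodule.span ℝ {ξ} ≤ LinearMap.ker (walkMatrix A)ᵀ.mulVecLin := by
    rw [Submodule.span_le, Set.singleton_subset_iff]; exact hmem
  have h1 : Module.finrank ℝ (Submodule.span ℝ {ξ}) = 1 := finrank_span_singleton hξ
  have hrn := LinearMap.finrank_range_add_finrank_ker (walkMatrix A)ᵀ.mulVecLin
  have hrt : (walkMatrix A)ᵀ.rank = n - 1 := by rw [Matrix.rank_transpose]; exact hrank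
  rw [show Module.finrank ℝ (LinearMap.range (walkMatrix A)ᵀ.mulVecLin) = (walkMatrix A)ᵀ.rank from rfl,
    hrt] at hrn
  have hfin : Module.finrank ℝ (Fin n → ℝ) = n := by simp
  rw [hfin] at hrn
  have h2 : Module.finrank ℝ (LinearMap.ker (walkMatrix A)ᵀ.mulVecLin) ≤ 1 := by omega
  exact (Submodule.eq_of_le_of_finrank_le hle (h1 ▸ h2)).symm

lemma mem_span_of_ker (hrank : (walkMatrix A).rank = n - 1) (hξ : ξ ≠ 0)
    (hker : (walkMatrix A)ᵀ *ᵥ ξ = 0) {v : Fin n → ℝ}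
    (hv : (walkMatrix A)ᵀ *ᵥ v = 0) : ∃ c : ℝ, v = c • ξ := by
  have : v ∈ Submodule.span ℝ {ξ} := by
    rw [← ker_eq_span hrank hξ hker, LinearMap.mem_ker, mulVecLin_apply]; exact hv
  rcases Submodule.mem_span_singleton.mp this with ⟨c, hc⟩
  exact ⟨c, hc.symm⟩

lemma eigen (hsym : Aᵀ = A) (hrank : (walkMatrix A).rank = n - 1) (hξ : ξ ≠ 0)
    (hker : (walkMatrix A)ᵀ *ᵥ ξ = 0) : ∃ c : ℝ, A *ᵥ ξ = c • ξ := by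
  apply mem_span_of_ker hrank hξ hker
  ext j
  rw [Pi.zero_apply, walk_tmv, dotProduct_mulVec]
  have h : ((A ^ (j:ℕ) *ᵥ fun _ => (1:ℝ)) ᵥ* A) = A ^ ((j:ℕ)+1) *ᵥ fun _ => (1:ℝ) := by
    rw [← mulVec_transpose, hsym, mulVec_mulVec, ← pow_succ']
  rw [h]
  exact dot_pow hker _

lemma vmv_mulVec (w v u : Fin n → ℝ) : vecMulVec w v *ᵥ u = (v ⬝ᵥ u) • w := by
  ext i
  simp only [vecMulVec_apply, mulVec, dotProduct, Pi.smul_apply, smul_eq_mul, Finset.sum_mul]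
  exact Finset.sum_congr rfl fun k _ => by ring

lemma mul_vmv (M : Matrix (Fin n) (Fin n) ℝ) (w v : Fin n → ℝ) :
    M * vecMulVec w v = vecMulVec (M *ᵥ w) v := by
  ext i j
  simp only [mul_apply, vecMulVec_apply, mulVec, dotProduct, Finset.sum_mul]
  exact Finset.sum_congr rfl fun k _ => by ring

lemma vmv_mul (M : Matrix (Fin n) (Fin n) ℝ) (w v : Fin n → ℝ) :
    vecMulVec w v * M = vecMulVec w (Mᵀ *ᵥ v) := by
  ext i j
  simp only [mul_apply, vecMulVec_apply, mulVec, dotProduct, transpose_apply]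
  rw [Finset.mul_sum]
  exact Finset.sum_congr rfl fun k _ => by ring

lemma vmv_smul (c : ℝ) (w v : Fin n → ℝ) : vecMulVec (c • w) v = c • vecMulVec w v := by
  ext i j
  simp [vecMulVec_apply, mul_assoc]

lemma vmv_transpose (w v : Fin n → ℝ) : (vecMulVec w v)ᵀ = vecMulVec v w := by
  ext i j
  simp [vecMulVec_apply, mul_comm]

lemma vmv_smul' (c : ℝ) (w v : Fin n → ℝ) : vecMulVec w (c • v) = c • vecMulVec w v := by
  ext i j
  simp [vecMulVec_apply]
  ring

lemma hh_transpose : (householder ξ)ᵀ = householder ξ := by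
  unfold householder
  rw [transpose_sub, transpose_one, transpose_smul, vmv_transpose]

lemma hh_mul_self (hdd : ξ ⬝ᵥ ξ ≠ 0) : householder ξ * householder ξ = 1 := by
  unfold householder
  set c := 2 / (ξ ⬝ᵥ ξ) with hc
  set M := vecMulVec ξ ξ with hM
  have hMM : M * M = (ξ ⬝ᵥ ξ) • M := by
    rw [hM, mul_vmv, vmv_mulVec, vmv_smul]
  have hprod : (c • M) * (c • M) = (2 * c) • M := by
    have h2 : c * (ξ ⬝ᵥ ξ) = 2 := div_mul_cancel₀ 2 hdd
    rw [Matrix.smul_mul, Matrix.mul_smul, hMM, smul_smul, smul_smul,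
      show c * c * (ξ ⬝ᵥ ξ) = 2 * c from by rw [show c * c * (ξ ⬝ᵥ ξ) = c * (ξ ⬝ᵥ ξ) * c from by ring, h2]]
  rw [sub_mul, mul_sub, mul_sub, one_mul, one_mul, mul_one, hprod, two_mul, add_smul]
  abel

lemma hh_mulVec (v : Fin n → ℝ) :
    householder ξ *ᵥ v = v - ((2/(ξ ⬝ᵥ ξ)) * (ξ ⬝ᵥ v)) • ξ := by
  unfold householder
  rw [sub_mulVec, one_mulVec, smul_mulVec, vmv_mulVec, smul_smul]

lemma hh_fix {v : Fin n → ℝ} (hv : ξ ⬝ᵥ v = 0) : householder ξ *ᵥ v = v := by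
  rw [hh_mulVec, hv, mul_zero, zero_smul, sub_zero]

lemma hh_xi (hdd : ξ ⬝ᵥ ξ ≠ 0) : householder ξ *ᵥ ξ = -ξ := by
  rw [hh_mulVec, div_mul_cancel₀ 2 hdd, two_smul]
  abel

lemma hh_comm (hsym : Aᵀ = A) {c₀ : ℝ} (hc : A *ᵥ ξ = c₀ • ξ) :
    A * householder ξ = householder ξ * A := by
  unfold householder
  rw [mul_sub, sub_mul, mul_one, one_mul, Matrix.mul_smul, Matrix.smul_mul,
    mul_vmv, vmv_mul, hsym, hc, vmv_smul, vmv_smul']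

lemma xi_dot_range (hker : (walkMatrix A)ᵀ *ᵥ ξ = 0) {u : Fin n → ℝ}
    (hu : u ∈ LinearMap.range (walkMatrix A).mulVecLin) : ξ ⬝ᵥ u = 0 := by
  rcases hu with ⟨x, rfl⟩
  rw [mulVecLin_apply, dotProduct_mulVec, ← mulVec_transpose, hker, zero_dotProduct]

lemma sup_top (hrank : (walkMatrix A).rank = n - 1) (hξ : ξ ≠ 0)
    (hker : (walkMatrix A)ᵀ *ᵥ ξ = 0) :
    LinearMap.range (walkMatrix A).mulVecLin ⊔ Submodule.span ℝ {ξ} = ⊤ := by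
  have hn : 0 < n := n_pos hξ
  have hdd : ξ ⬝ᵥ ξ ≠ 0 := fun h => hξ (dotProduct_self_eq_zero.mp h)
  have hinf : LinearMap.range (walkMatrix A).mulVecLin ⊓ Submodule.span ℝ {ξ} = ⊥ := by
    rw [Submodule.eq_bot_iff]
    rintro v ⟨hv1, hv2⟩
    rcases Submodule.mem_span_singleton.mp hv2 with ⟨c, rfl⟩
    have h0 : ξ ⬝ᵥ (c • ξ) = 0 := xi_dot_range hker hv1
    rw [dotProduct_smul, smul_eq_mul] at h0
    rcases mul_eq_zero.mp h0 with h | h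
    · rw [h, zero_smul]
    · exact absurd h hdd
  have hfs := Submodule.finrank_sup_add_finrank_inf_eq
    (LinearMap.range (walkMatrix A).mulVecLin) (Submodule.span ℝ {ξ})
  rw [hinf, finrank_bot, add_zero, finrank_span_singleton hξ,
    show Module.finrank ℝ (LinearMap.range (walkMatrix A).mulVecLin) = (walkMatrix A).rank from rfl,
    hrank] at hfs
  apply Submodule.eq_top_of_finrank_eq
  rw [hfs]
  simp
  omega

lemma ext_mulVec {Q Q' : Matrix (Fin n) (Fin n) ℝ} (h : ∀ v, Q *ᵥ v = Q' *ᵥ v) : Q = Q' := by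
  ext i j
  have := congrFun (h (Pi.single j 1)) i
  simpa [mulVec_single] using this

end Main

/-- Theorem 8. For an almost controllable graph `G`, the set of regular
orthogonal solutions of `Qᵀ A Q = A` is exactly `{I, Q₀}`. -/
theorem regular_orthogonal_fixing_almost_controllable
    {n : ℕ} (A : Matrix (Fin n) (Fin n) ℝ) (hA : A.IsAdjMatrix)
    (hrank : (walkMatrix A).rank = n - 1)
    (ξ : Fin n → ℝ) (hξ : ξ ≠ 0) (hker : (walkMatrix A)ᵀ *ᵥ ξ = 0) :
    ∀ Q : Matrix (Fin n) (Fin n) ℝ,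
      (Qᵀ * Q = 1 ∧ (Q *ᵥ fun _ => (1 : ℝ)) = (fun _ => 1) ∧ Qᵀ * A * Q = A) ↔
        (Q = 1 ∨ Q = householder ξ) := by
  intro Q
  have hsym : Aᵀ = A := hA.symm
  have hdd : ξ ⬝ᵥ ξ ≠ 0 := fun h => hξ (dotProduct_self_eq_zero.mp h)
  have hde : ξ ⬝ᵥ (fun _ => (1:ℝ)) = 0 := by
    have := dot_pow hker 0
    rwa [pow_zero, one_mulVec, dotProduct_comm] at this
  obtain ⟨c₀, hc₀⟩ := eigen hsym hrank hξ hker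
  constructor
  · rintro ⟨hQ1, hQe, hQA⟩
    have hQQ : Q * Qᵀ = 1 := mul_eq_one_comm.mpr hQ1
    have hcomm : Q * A = A * Q := by
      conv_lhs => rw [← hQA]
      rw [← mul_assoc, ← mul_assoc, hQQ, one_mul]
    have hpow : ∀ k : ℕ, Q * A ^ k = A ^ k * Q := by
      intro k
      induction k with
      | zero => simp
      | succ k ih => rw [pow_succ, ← mul_assoc, ih, mul_assoc, hcomm, ← mul_assoc]
    have hfixpow : ∀ k : ℕ, Q *ᵥ (A ^ k *ᵥ fun _ => (1:ℝ)) = A ^ k *ᵥ fun _ => (1:ℝ) := by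
      intro k
      rw [mulVec_mulVec, hpow, ← mulVec_mulVec, hQe]
    have hQW' : Q * walkMatrix A = walkMatrix A := by
      ext i j
      have := congrFun (hfixpow j) i
      simpa [walkMatrix, mul_apply, mulVec, dotProduct] using this
    have hQW : ∀ u ∈ LinearMap.range (walkMatrix A).mulVecLin, Q *ᵥ u = u := by
      rintro u ⟨x, rfl⟩
      rw [mulVecLin_apply, mulVec_mulVec, hQW']
    have hQxi : ∃ t : ℝ, Q *ᵥ ξ = t • ξ := by
      apply mem_span_of_ker hrank hξ hker
      ext j
      rw [Pi.zero_apply, walk_tmv, dotProduct_mulVec, ← mulVec_transpose]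
      have h : Qᵀ *ᵥ (A ^ (j:ℕ) *ᵥ fun _ => (1:ℝ)) = A ^ (j:ℕ) *ᵥ fun _ => (1:ℝ) := by
        conv_lhs => rw [← hfixpow j]
        rw [mulVec_mulVec, hQ1, one_mulVec]
      rw [h]
      exact dot_pow hker _
    obtain ⟨t, ht⟩ := hQxi
    have hnorm : (Q *ᵥ ξ) ⬝ᵥ (Q *ᵥ ξ) = ξ ⬝ᵥ ξ := by
      rw [dotProduct_mulVec, ← mulVec_transpose, mulVec_mulVec, hQ1, one_mulVec]
    rw [ht, dotProduct_smul, smul_dotProduct, smul_eq_mul, smul_eq_mul] at hnorm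
    have ht2 : t = 1 ∨ t = -1 := by
      have h0 : (t * t - 1) * (ξ ⬝ᵥ ξ) = 0 := by linear_combination hnorm
      rcases mul_eq_zero.mp h0 with h | h
      · exact mul_self_eq_one_iff.mp (by linarith)
      · exact absurd h hdd
    have hsup := sup_top hrank hξ hker
    rcases ht2 with h1 | h1
    · left
      apply ext_mulVec
      intro v
      have hv : v ∈ LinearMap.range (walkMatrix A).mulVecLin ⊔ Submodule.span ℝ {ξ} := by
        rw [hsup]; trivial
      rcases Submodule.mem_sup.mp hv with ⟨u, hu, w, hw, rfl⟩
      rcases Submodule.mem_span_singleton.mp hw with ⟨s, rfl⟩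
      rw [mulVec_add, mulVec_add, mulVec_smul, mulVec_smul, hQW u hu, ht, h1, one_smul,
        one_mulVec, one_mulVec]
    · right
      apply ext_mulVec
      intro v
      have hv : v ∈ LinearMap.range (walkMatrix A).mulVecLin ⊔ Submodule.span ℝ {ξ} := by
        rw [hsup]; trivial
      rcases Submodule.mem_sup.mp hv with ⟨u, hu, w, hw, rfl⟩
      rcases Submodule.mem_span_singleton.mp hw with ⟨s, rfl⟩
      rw [mulVec_add, mulVec_add, mulVec_smul, mulVec_smul, hQW u hu, ht, h1,
        hh_fix (xi_dot_range hker hu), hh_xi hdd]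
      simp
  · rintro (rfl | rfl)
    · exact ⟨by simp, by simp, by simp⟩
    · refine ⟨?_, hh_fix hde, ?_⟩
      · rw [hh_transpose, hh_mul_self hdd]
      · rw [hh_transpose, mul_assoc, hh_comm hsym hc₀, ← mul_assoc, hh_mul_self hdd, one_mul]
end Aux
end
end
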